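/- arXiv:1802.03920 — 7 statements merged into one kernel-verified Lean document; each statement's English description precedes it below -/
import Mathlib

section
/- For every field F and every simple graph G on n vertices, the product of the minrank of G over F and the minrank of the complement graph of G over F is at least n. -/
/-- A matrix `M` over a field `F` represents a simple graph `G` if all diagonal entries are
nonzero and entries at distinct non-adjacent pairs of vertices are zero. -/
def Represents {V F : Type*} [Field F] (G : SimpleGraph V) (M : Matrix V V F) : Prop :=
  (∀ v, M v v ≠ 0) ∧ ∀ u v : V, u ≠ v → ¬G.Adj u v → M u v = 0

/-- The minrank of a simple graph `G` over a field `F`. -/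
noncomputable def minrank (F : Type*) [Field F] {V : Type*} [Fintype V] [DecidableEq V]
    (G : SimpleGraph V) : ℕ :=
  sInf {r : ℕ | ∃ M : Matrix V V F, Represents G M ∧ M.rank = r}

/-!
Every matrix representing `G` is zero off the edges of `G`, and every matrix representing `Gᶜ`
is zero on them, so the Hadamard product `M ⊙ N` of two such matrices is diagonal with nonzero
diagonal, of rank `n`. On the other hand the columns of `M ⊙ N` are pointwise products of columns
of `M` and of `N`, so they lie in the product of the two column spaces, whose dimension is at most
`rank M * rank N`.
-/

open Matrix Module

section

variable {K S : Type*} [Field K] [Ring S] [Algebra K S]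
  (P Q : Submodule K S) [FiniteDimensional K P] [FiniteDimensional K Q]

instance Submodule.finiteDimensional_mul : FiniteDimensional K ↥(P * Q) :=
  Submodule.mulMap_range P Q ▸ inferInstance

theorem Submodule.finrank_mul_le :
    finrank K ↥(P * Q) ≤ finrank K P * finrank K Q := by
  rw [← Submodule.mulMap_range, ← Module.finrank_tensorProduct]
  exact LinearMap.finrank_range_le _

end

theorem Matrix.rank_hadamard_le {K m n : Type*} [Field K] [Fintype n] (A B : Matrix m n K) :
    (A ⊙ B).rank ≤ A.rank * B.rank := by
  simp only [rank_eq_finrank_span_cols]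
  have := FiniteDimensional.span_of_finite K (Set.finite_range A.col)
  have := FiniteDimensional.span_of_finite K (Set.finite_range B.col)
  have hcols : Submodule.span K (Set.range (A ⊙ B).col) ≤
      Submodule.span K (Set.range A.col) * Submodule.span K (Set.range B.col) := by
    rw [Submodule.span_le]
    rintro _ ⟨j, rfl⟩
    exact Submodule.mul_mem_mul (Submodule.subset_span ⟨j, rfl⟩)
      (Submodule.subset_span ⟨j, rfl⟩)
  exact (Submodule.finrank_mono hcols).trans (Submodule.finrank_mul_le _ _)

namespace Represents

variable {V F : Type*} [Field F] {G : SimpleGraph V} {M N : Matrix V V F}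

theorem one [DecidableEq V] : Represents G (1 : Matrix V V F) :=
  ⟨fun _ => by simp, fun _ _ huv _ => one_apply_ne huv⟩

theorem hadamard_compl_eq_diagonal [DecidableEq V] (hM : Represents G M) (hN : Represents Gᶜ N) :
    M ⊙ N = diagonal fun v => M v v * N v v := by
  ext u v
  rcases eq_or_ne u v with rfl | huv
  · simp
  rw [hadamard_apply, diagonal_apply_ne _ huv]
  by_cases hadj : G.Adj u v
  · rw [hN.2 u v huv fun hc => ((G.compl_adj u v).mp hc).2 hadj, mul_zero]
  · rw [hM.2 u v huv hadj, zero_mul]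

theorem card_le_rank_mul_rank [Fintype V] [DecidableEq V] (hM : Represents G M)
    (hN : Represents Gᶜ N) : Fintype.card V ≤ M.rank * N.rank := by
  classical
  calc Fintype.card V = (M ⊙ N).rank := by
        simp [hadamard_compl_eq_diagonal hM hN, rank_diagonal, hM.1, hN.1]
    _ ≤ M.rank * N.rank := rank_hadamard_le M N

end Represents

theorem exists_represents_rank_eq_minrank (F : Type*) [Field F] {V : Type*} [Fintype V]
    [DecidableEq V] (G : SimpleGraph V) :
    ∃ M : Matrix V V F, Represents G M ∧ M.rank = minrank F G :=
  Nat.sInf_mem (s := {r | ∃ M : Matrix V V F, Represents G M ∧ M.rank = r})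
    ⟨_, 1, .one, rfl⟩

theorem minrank_mul_minrank_compl_ge (F : Type*) [Field F] {V : Type*} [Fintype V]
    [DecidableEq V] (G : SimpleGraph V) :
    Fintype.card V ≤ minrank F G * minrank F Gᶜ := by
  obtain ⟨M, hM, hMr⟩ := exists_represents_rank_eq_minrank F G
  obtain ⟨N, hN, hNr⟩ := exists_represents_rank_eq_minrank F Gᶜ
  rw [← hMr, ← hNr]
  exact hM.card_le_rank_mul_rank hN
end

section
/- For every prime p, prime power q = p^ℓ with ℓ ≥ 1, and integer r, the prime p divides the binomial coefficient C(r-1, q-1) if and only if q does not divide r. -/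
/-!
Vandermonde's identity expands `C(n + p^ℓ, k)` as `∑ C(n, i) C(p^ℓ, j)`, and `p ∣ C(p^ℓ, j)` for
`0 < j < p^ℓ`; hence `n ↦ C(n, k) mod p` has period `p^ℓ` when `k < p^ℓ`. So `C(r - 1, q - 1)` may be
computed with `r` replaced by its residue `t ∈ [0, q)`: for `t = 0` it is `C(-1, q - 1) = ±1`, and
for `0 < t < q` it is `C(t - 1, q - 1) = 0`.
-/

namespace Int

theorem ringChoose_neg_one (k : ℕ) : Ring.choose (-1 : ℤ) k = (-1) ^ k := by
  rw [Ring.choose_neg, add_sub_cancel_left, Ring.choose_natCast, Nat.choose_self]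
  simp [Int.negOnePow_def, Units.smul_def]

theorem ringChoose_eq_zero_of_lt {n : ℤ} {k : ℕ} (h0 : 0 ≤ n) (hk : n < k) :
    Ring.choose n k = 0 := by
  lift n to ℕ using h0
  rw [Ring.choose_natCast, Nat.choose_eq_zero_of_lt (by exact_mod_cast hk), Nat.cast_zero]

theorem periodic_ringChoose_prime_pow {p : ℕ} [Fact p.Prime] {ℓ k : ℕ} (hk : k < p ^ ℓ) :
    Function.Periodic (fun n : ℤ => ((Ring.choose n k : ℤ) : ZMod p)) ((p ^ ℓ : ℕ) : ℤ) := by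
  intro n
  dsimp only
  rw [Ring.add_choose_eq k (Commute.all _ _), Int.cast_sum,
    Finset.sum_eq_single_of_mem (k, 0) (by simp)]
  · simp
  · rintro ⟨i, j⟩ hij hne
    rw [Finset.HasAntidiagonal.mem_antidiagonal] at hij
    have hj : j ≠ 0 := by
      rintro rfl
      exact hne (by simpa using hij)
    have hdvd : p ∣ (p ^ ℓ).choose j := (Fact.out : p.Prime).dvd_choose_pow hj (by omega)
    rw [Ring.choose_natCast, Int.cast_mul, Int.cast_natCast,
      (ZMod.natCast_eq_zero_iff _ p).mpr hdvd, mul_zero]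

end Int

theorem prime_dvd_choose_iff_not_dvd_general (p : ℕ) (hp : p.Prime) (ℓ : ℕ) (q : ℕ)
    (hq : q = p ^ ℓ) (r : ℤ) :
    (p : ℤ) ∣ Ring.choose (r - 1) (q - 1) ↔ ¬(q : ℤ) ∣ r := by
  have := Fact.mk hp
  have hq0 : 0 < q := hq ▸ pow_pos hp.pos ℓ
  have hperiod : Function.Periodic (fun n : ℤ => ((Ring.choose n (q - 1) : ℤ) : ZMod p)) q := by
    subst hq
    exact Int.periodic_ringChoose_prime_pow (by omega)
  set t := r % q
  have ht0 : 0 ≤ t := Int.emod_nonneg r (by omega)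
  have htq : t < q := Int.emod_lt_of_pos r (by omega)
  have hr : r - 1 = t - 1 + r / q * q := by linarith [Int.mul_ediv_add_emod r q]
  have hreduce :
      ((Ring.choose (r - 1) (q - 1) : ℤ) : ZMod p) = (Ring.choose (t - 1) (q - 1) : ℤ) := by
    rw [hr]
    simpa using hperiod.int_mul (r / q) (t - 1)
  have hdvd : (q : ℤ) ∣ r ↔ t = 0 := Int.dvd_iff_emod_eq_zero
  rw [hdvd, ← ZMod.intCast_zmod_eq_zero_iff_dvd, hreduce, ZMod.intCast_zmod_eq_zero_iff_dvd]
  rcases eq_or_ne t 0 with ht | ht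
  · rw [ht, zero_sub, Int.ringChoose_neg_one]
    refine iff_of_false (fun h => ?_) (not_not_intro rfl)
    exact (Nat.prime_iff_prime_int.mp hp).not_isUnit (isUnit_of_dvd_unit h (isUnit_neg_one.pow _))
  · rw [Int.ringChoose_eq_zero_of_lt (by omega) (by omega)]
    simpa using ht

/-- For a prime `p`, a prime power `q = p ^ ℓ` (`ℓ ≥ 1`), and an integer `r`,
`p` divides the (generalized) binomial coefficient `C(r - 1, q - 1)` if and only if
`q` does not divide `r`. -/
theorem prime_dvd_choose_iff_not_dvd (p : ℕ) (hp : p.Prime) (ℓ : ℕ) (hℓ : 1 ≤ ℓ) (q : ℕ)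
    (hq : q = p ^ ℓ) (r : ℤ) :
    (p : ℤ) ∣ Ring.choose (r - 1) (q - 1) ↔ ¬(q : ℤ) ∣ r :=
  prime_dvd_choose_iff_not_dvd_general p hp ℓ q hq r
end

section
/- For every integers d ≥ s ≥ ℓ ≥ 0 and real numbers a_0,...,a_ℓ, the real matrix M = Σ_{k=0}^{ℓ} a_k · M^{(d)}(s,k) satisfies rank_ℝ(M) ≤ C(d, ℓ). -/
/-- The inclusion matrix `N^{(d)}(a, b)` over `ℝ`: rows indexed by `a`-subsets of `[d]`,
columns by `b`-subsets of `[d]`, with entry `(A, B)` equal to `1` iff `B ⊆ A`. -/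
def inclMatrixR (d a b : ℕ) :
    Matrix {A : Finset (Fin d) // A.card = a} {B : Finset (Fin d) // B.card = b} ℝ :=
  fun A B => if B.1 ⊆ A.1 then 1 else 0

/-- The matrix `M^{(d)}(s, k) = N^{(d)}(s, k) · N^{(d)}(s, k)ᵀ`. -/
def MMatrixR (d s k : ℕ) :
    Matrix {A : Finset (Fin d) // A.card = s} {A : Finset (Fin d) // A.card = s} ℝ :=
  inclMatrixR d s k * (inclMatrixR d s k).transpose

lemma card_between (d : ℕ) (A B : Finset (Fin d)) (k ℓ : ℕ) (hB : B.card = k)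
    (hkl : k ≤ ℓ) (hBA : B ⊆ A) :
    (Finset.univ.filter
        (fun L : {L : Finset (Fin d) // L.card = ℓ} => L.1 ⊆ A ∧ B ⊆ L.1)).card
      = (A.card - k).choose (ℓ - k) := by
  have hcard : (A \ B).card = A.card - k := by rw [Finset.card_sdiff_of_subset hBA, hB]
  rw [← hcard, ← Finset.card_powersetCard]
  refine Finset.card_bij' (fun L _ => L.1 \ B)
    (fun L' hL' => ⟨L' ∪ B, ?_⟩) ?_ ?_ ?_ ?_
  · simp only [Finset.mem_powersetCard] at hL'
    have hdisj : Disjoint L' B := Finset.disjoint_left.2 fun x hx =>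
      (Finset.mem_sdiff.1 (hL'.1 hx)).2
    rw [Finset.card_union_of_disjoint hdisj, hL'.2, hB, Nat.sub_add_cancel hkl]
  · rintro ⟨L, hL⟩ hmem
    simp only [Finset.mem_filter, Finset.mem_univ, true_and] at hmem
    rw [Finset.mem_powersetCard]
    exact ⟨Finset.sdiff_subset_sdiff hmem.1 le_rfl,
      by rw [Finset.card_sdiff_of_subset hmem.2, hL, hB]⟩
  · intro L' hL'
    simp only [Finset.mem_powersetCard] at hL'
    simp only [Finset.mem_filter, Finset.mem_univ, true_and]
    constructor
    · exact Finset.union_subset (hL'.1.trans Finset.sdiff_subset) hBA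
    · exact Finset.subset_union_right
  · rintro ⟨L, hL⟩ hmem
    simp only [Finset.mem_filter, Finset.mem_univ, true_and] at hmem
    ext : 1
    simp only
    rw [Finset.sdiff_union_of_subset hmem.2]
  · intro L' hL'
    simp only [Finset.mem_powersetCard] at hL'
    have hdisj : Disjoint L' B := Finset.disjoint_left.2 fun x hx =>
      (Finset.mem_sdiff.1 (hL'.1 hx)).2
    simp only
    rw [Finset.union_sdiff_right, Finset.sdiff_eq_self_of_disjoint hdisj]

lemma incl_mul_incl (d s ℓ k : ℕ) (hkl : k ≤ ℓ) (hls : ℓ ≤ s) :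
    inclMatrixR d s ℓ * inclMatrixR d ℓ k
      = (((s - k).choose (ℓ - k) : ℝ)) • inclMatrixR d s k := by
  ext ⟨A, hA⟩ ⟨B, hB⟩
  simp only [Matrix.mul_apply, inclMatrixR, Matrix.smul_apply, smul_eq_mul]
  simp only [ite_mul, one_mul, zero_mul, ← ite_and]
  rw [Finset.sum_boole]
  by_cases hBA : B ⊆ A
  · rw [card_between d A B k ℓ hB hkl hBA, hA, if_pos hBA, mul_one]
  · rw [if_neg hBA, mul_zero, Finset.filter_false_of_mem, Finset.card_empty, Nat.cast_zero]
    rintro ⟨L, hL⟩ _ ⟨h1, h2⟩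
    exact hBA (h2.trans h1)

/-- For `ℓ ≤ s ≤ d` and reals `a_0, …, a_ℓ`, the matrix
`M = ∑_{k=0}^{ℓ} a_k · M^{(d)}(s, k)` has real rank at most `C(d, ℓ)`. -/
theorem rank_sum_smul_MMatrixR_le (d s ℓ : ℕ) (hls : ℓ ≤ s) (hsd : s ≤ d) (a : ℕ → ℝ) :
    (∑ k ∈ Finset.range (ℓ + 1), a k • MMatrixR d s k).rank ≤ d.choose ℓ := by
  have key : ∀ k ∈ Finset.range (ℓ + 1),
      a k • MMatrixR d s k = inclMatrixR d s ℓ *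
        ((a k * (((s - k).choose (ℓ - k) : ℝ))⁻¹) •
          (inclMatrixR d ℓ k * (inclMatrixR d s k).transpose)) := by
    intro k hk
    have hkl : k ≤ ℓ := Nat.lt_succ_iff.1 (Finset.mem_range.1 hk)
    have hc : (((s - k).choose (ℓ - k) : ℝ)) ≠ 0 := by
      exact_mod_cast (Nat.choose_pos (Nat.sub_le_sub_right hls k)).ne'
    rw [Matrix.mul_smul, ← Matrix.mul_assoc, incl_mul_incl d s ℓ k hkl hls]
    rw [MMatrixR, Matrix.smul_mul, smul_smul]
    congr 1
    field_simp
  rw [Finset.sum_congr rfl key, ← Matrix.mul_sum]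
  refine le_trans (Matrix.rank_mul_le_left _ _) ?_
  refine le_trans (Matrix.rank_le_card_width _) ?_
  rw [Fintype.card_finset_len, Fintype.card_fin]
end

section
/- Let t ≤ s ≤ d be integers, T ⊆ {0,1,...,s-1} a set of size t, and p > s a prime. Then the minrank over F_p of the generalized Kneser graph K(d,s,T) is at most the sum over i from 0 to s-t of C(d,i). -/
/-- The generalized Kneser graph `K(d, s, T)`: vertices are the `s`-subsets of `[d]`, and two
distinct sets are adjacent iff the size of their intersection lies in `T`. -/
def kneser (d s : ℕ) (T : Set ℕ) : SimpleGraph {A : Finset (Fin d) // A.card = s} where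
  Adj A B := A ≠ B ∧ (A.1 ∩ B.1).card ∈ T
  symm := ⟨fun A B h => ⟨h.1.symm, by rw [Finset.inter_comm]; exact h.2⟩⟩
  loopless := ⟨fun A h => h.1 rfl⟩

open Finset Matrix

theorem det_choose_ne_zero {F : Type*} [Field F] {n : ℕ} (x : Fin n → ℕ)
    (hx : Function.Injective fun i => (x i : F)) :
    (Matrix.of fun i k : Fin n => ((x i).choose k : F)).det ≠ 0 := by
  have hdesc : (Matrix.of fun i k : Fin n => (descPochhammer F k).eval (x i : F)) =
      (Matrix.of fun i k : Fin n => ((x i).choose k : F)) *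
        Matrix.diagonal fun k : Fin n => ((k : ℕ).factorial : F) := by
    ext i k
    simp [descPochhammer_eval_eq_descFactorial, Nat.descFactorial_eq_factorial_mul_choose, mul_comm]
  have hvand := det_eval_matrixOfPolynomials_eq_det_vandermonde (fun i => (x i : F))
    (fun k => descPochhammer F k) (fun k => descPochhammer_natDegree F k)
    (fun k => monic_descPochhammer F k)
  rw [hdesc, det_mul, det_diagonal] at hvand
  intro h
  rw [h, zero_mul, det_vandermonde_eq_zero_iff] at hvand
  obtain ⟨i, j, hij, hne⟩ := hvand
  exact hne (hx hij)

theorem exists_sum_mul_choose_eq {F : Type*} [Field F] (L : Finset ℕ)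
    (hL : Set.InjOn (Nat.cast : ℕ → F) L) (f : ℕ → F) :
    ∃ c : Fin L.card → F, ∀ x ∈ L, ∑ k, c k * x.choose k = f x := by
  let e := L.equivFin
  let B : Matrix (Fin L.card) (Fin L.card) F := Matrix.of fun i k => ((e.symm i : ℕ).choose k : F)
  have hB : IsUnit B := (isUnit_iff_isUnit_det B).2 <| IsUnit.mk0 _ <| det_choose_ne_zero _
    fun i j hij => e.symm.injective <| Subtype.ext <| hL (e.symm i).2 (e.symm j).2 hij
  obtain ⟨c, hc⟩ := mulVec_surjective_iff_isUnit.2 hB fun i => f (e.symm i)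
  refine ⟨c, fun x hx => ?_⟩
  simpa [B, mulVec, dotProduct, mul_comm] using congrFun hc (e ⟨x, hx⟩)

theorem ZMod.exists_sum_mul_choose_eq (p : ℕ) [Fact p.Prime] (L : Finset ℕ) (hL : ∀ x ∈ L, x < p)
    (f : ℕ → ZMod p) : ∃ c : Fin L.card → ZMod p, ∀ x ∈ L, ∑ k, c k * x.choose k = f x :=
  _root_.exists_sum_mul_choose_eq L (fun x hx y hy hxy => by
    simpa [ZMod.natCast_eq_natCast_iff', Nat.mod_eq_of_lt (hL x hx), Nat.mod_eq_of_lt (hL y hy)]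
      using hxy) f

theorem sum_ite_subset_eq_choose {α F : Type*} [Fintype α] [DecidableEq α]
    [AddCommMonoidWithOne F] (k : ℕ) (C : Finset α) :
    ∑ I : {I : Finset α // I.card = k}, (if I.1 ⊆ C then (1 : F) else 0) = C.card.choose k := by
  rw [← sum_subtype (powersetCard k univ) (fun I => mem_powersetCard_univ)
    (fun I => if I ⊆ C then (1 : F) else 0), sum_boole, ← card_powersetCard]
  congr 2
  ext I
  simp [mem_powersetCard, and_comm]

section IntersectionMatrix

variable {ι α F : Type*} [DecidableEq α]

def intersectionMatrix (f : ι → Finset α) (g : ℕ → F) : Matrix ι ι F :=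
  Matrix.of fun i j => g (f i ∩ f j).card

theorem rank_intersectionMatrix_le [Fintype ι] [Fintype α] [Field F] (f : ι → Finset α) {n : ℕ}
    (c : Fin n → F) :
    (intersectionMatrix f fun x => ∑ k, c k * x.choose k).rank ≤
      ∑ k : Fin n, (Fintype.card α).choose k := by
  let P : Matrix ι (Σ k : Fin n, {I : Finset α // I.card = k}) F :=
    Matrix.of fun i I => if I.2.1 ⊆ f i then 1 else 0
  have hfactor : intersectionMatrix f (fun x => ∑ k, c k * x.choose k) =
      P * Matrix.diagonal (fun I : Σ k : Fin n, {I : Finset α // I.card = k} => c I.1) * Pᵀ := by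
    ext i j
    rw [mul_apply, Fintype.sum_sigma]
    simp only [intersectionMatrix, of_apply, mul_diagonal, transpose_apply, P]
    refine sum_congr rfl fun k _ => ?_
    rw [← sum_ite_subset_eq_choose, mul_sum]
    refine sum_congr rfl fun I _ => ?_
    simp only [subset_inter_iff]
    split_ifs <;> simp_all
  calc _ ≤ P.rank := hfactor ▸ (rank_mul_le_left _ _).trans (rank_mul_le_left _ _)
    _ ≤ _ := by simpa using P.rank_le_card_width

end IntersectionMatrix

theorem Finset.card_inter_lt_of_card_eq {α : Type*} [DecidableEq α] {A B : Finset α}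
    (hAB : A.card = B.card) (hne : A ≠ B) : (A ∩ B).card < A.card := by
  refine card_lt_card (ssubset_iff_subset_ne.2 ⟨inter_subset_left, fun h => hne ?_⟩)
  exact eq_of_subset_of_card_le (inter_eq_left.1 h) hAB.ge

theorem represents_kneser_intersectionMatrix {F : Type*} [Field F] {d s : ℕ} {T : Set ℕ}
    {g : ℕ → F} (hs : g s ≠ 0) (hT : ∀ x < s, x ∉ T → g x = 0) :
    Represents (kneser d s T) (intersectionMatrix Subtype.val g) := by
  refine ⟨fun A => by simpa [intersectionMatrix, A.2] using hs, fun A B hne hAB => ?_⟩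
  have hlt : (A.1 ∩ B.1).card < s := by
    simpa only [A.2] using
      card_inter_lt_of_card_eq (A.2.trans B.2.symm) (Subtype.coe_ne_coe.2 hne)
  exact hT _ hlt fun hmem => hAB ⟨hne, hmem⟩

theorem minrank_kneser_le_sum_general (d s t : ℕ) (T : Finset ℕ) (hT : ∀ i ∈ T, i < s)
    (hTcard : T.card = t) (p : ℕ) [Fact p.Prime] (hps : s < p) :
    minrank (ZMod p) (kneser d s (T : Set ℕ)) ≤ ∑ i ∈ Finset.range (s - t + 1), d.choose i := by
  set L := insert s (range s \ T)
  have hLcard : L.card = s - t + 1 := by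
    rw [card_insert_of_notMem (by simp), card_sdiff_of_subset fun i hi => mem_range.2 (hT i hi),
      card_range, hTcard]
  have hLp : ∀ x ∈ L, x < p := by
    simp only [L, mem_insert, mem_sdiff, mem_range]
    rintro x (rfl | ⟨hx, -⟩) <;> omega
  obtain ⟨c, hc⟩ := ZMod.exists_sum_mul_choose_eq p L hLp fun x => if x = s then 1 else 0
  have hrep : Represents (kneser d s (T : Set ℕ))
      (intersectionMatrix Subtype.val fun x => ∑ k, c k * x.choose k) := by
    refine represents_kneser_intersectionMatrix (by simp [hc s (mem_insert_self _ _)])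
      fun x hx hxT => ?_
    simpa [hx.ne] using hc x (mem_insert_of_mem (mem_sdiff.2 ⟨mem_range.2 hx, hxT⟩))
  calc minrank (ZMod p) (kneser d s (T : Set ℕ))
      ≤ (intersectionMatrix Subtype.val fun x => ∑ k, c k * x.choose k).rank :=
        Nat.sInf_le ⟨_, hrep, rfl⟩
    _ ≤ ∑ k : Fin L.card, d.choose k := by
        simpa using
          rank_intersectionMatrix_le (Subtype.val : {A : Finset (Fin d) // A.card = s} → _) c
    _ = ∑ i ∈ range (s - t + 1), d.choose i := by rw [Fin.sum_univ_eq_sum_range, hLcard]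

/-- For `t ≤ s ≤ d`, a set `T ⊆ {0, 1, …, s-1}` of size `t`, and a prime `p > s`, the minrank
of `K(d, s, T)` over `F_p` is at most `∑_{i=0}^{s-t} C(d, i)`. -/
theorem minrank_kneser_le_sum (d s t : ℕ) (T : Finset ℕ) (hT : ∀ i ∈ T, i < s)
    (hTcard : T.card = t) (hts : t ≤ s) (hsd : s ≤ d) (p : ℕ) [Fact p.Prime] (hps : s < p) :
    minrank (ZMod p) (kneser d s (T : Set ℕ)) ≤ ∑ i ∈ Finset.range (s - t + 1), d.choose i :=
  minrank_kneser_le_sum_general d s t T hT hTcard p hps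
end

section
/- Let t ≤ s ≤ d be integers, T ⊆ {0,1,...,s-1} a set of size t, and p > s a prime. Then the minrank over F_p of the generalized Kneser graph K(d,s,T) is at most C(d, s-t). -/
open Finset Polynomial fwdDiff
open scoped Nat

theorem Nat.choose_dvd_factorial {n k : ℕ} (h : k ≤ n) : n.choose k ∣ n ! :=
  ⟨k ! * (n - k)!, by rw [← mul_assoc, Nat.choose_mul_factorial_mul_factorial h]⟩

theorem Polynomial.exists_eval_natCast_eq_sum_mul_choose {R : Type*} [CommRing R] (P : R[X])
    {r : ℕ} (hP : P.natDegree ≤ r) :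
    ∃ c : ℕ → R, ∀ n : ℕ, P.eval (n : R) = ∑ k ∈ range (r + 1), c k * n.choose k := by
  set f : ℕ → R := fun m => P.eval (m : R)
  have hvanish : ∀ k, r < k → Δ_[1] ^[k] f 0 = 0 := fun k hk => by
    simpa [f, fwdDiff_iter_eq_sum_shift] using
      congr_fun (fwdDiff_iter_eq_zero_of_degree_lt (P := P) (n := k) (by omega)) 0
  refine ⟨fun k => Δ_[1] ^[k] f 0, fun n => ?_⟩
  calc P.eval (n : R) = ∑ k ∈ range (n + 1), Δ_[1] ^[k] f 0 * n.choose k := by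
        simpa [f, mul_comm] using shift_eq_sum_fwdDiff_iter 1 f n 0
    _ = ∑ k ∈ range (n + r + 1), Δ_[1] ^[k] f 0 * n.choose k :=
        sum_subset (range_subset_range.2 (by omega)) fun k _ hk => by
          rw [Nat.choose_eq_zero_of_lt (by simpa using hk), Nat.cast_zero, mul_zero]
    _ = ∑ k ∈ range (r + 1), Δ_[1] ^[k] f 0 * n.choose k :=
        (sum_subset (range_subset_range.2 (by omega)) fun k _ hk => by
          rw [hvanish k (by simpa using hk), zero_mul]).symm

theorem Finset.sum_powersetCard_choose_card_inter {α : Type*} [DecidableEq α] (A B : Finset α)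
    {k r : ℕ} (hk : k ≤ r) :
    ∑ R ∈ B.powersetCard r, (#(A ∩ R)).choose k =
      (#(A ∩ B)).choose k * (#B - k).choose (r - k) := by
  -- Double count the pairs `K ⊆ R` with `K` a `k`-subset of `A ∩ B`.
  have hcount : ∀ R ∈ B.powersetCard r,
      (#(A ∩ R)).choose k =
        #((A ∩ B).powersetCard k |>.bipartiteAbove (fun R K => K ⊆ R) R) := by
    intro R hR
    rw [← card_powersetCard, bipartiteAbove]
    congr 1
    ext K
    simp only [mem_filter, mem_powersetCard, subset_inter_iff]
    have hRB := (mem_powersetCard.1 hR).1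
    exact ⟨fun ⟨⟨hA, hR⟩, hK⟩ => ⟨⟨⟨hA, hR.trans hRB⟩, hK⟩, hR⟩,
      fun ⟨⟨⟨hA, _⟩, hK⟩, hR⟩ => ⟨⟨hA, hR⟩, hK⟩⟩
  rw [sum_congr rfl hcount, sum_card_bipartiteAbove_eq_sum_card_bipartiteBelow,
    ← smul_eq_mul, ← card_powersetCard, ← sum_const]
  refine sum_congr rfl fun K hK => ?_
  obtain ⟨hKAB, hKk⟩ := mem_powersetCard.1 hK
  rw [bipartiteBelow, card_filter_powersetCard_subset K B r (hKAB.trans inter_subset_right)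
    (hKk ▸ hk), hKk]

theorem Finset.card_inter_lt_of_ne {α : Type*} [DecidableEq α] {A B : Finset α} {s : ℕ}
    (hA : #A = s) (hB : #B = s) (hAB : A ≠ B) : #(A ∩ B) < s := by
  refine (hA ▸ card_le_card inter_subset_left).lt_of_ne fun hcard => hAB ?_
  exact (eq_of_subset_of_card_le inter_subset_left (by omega)).symm.trans
    (eq_of_subset_of_card_le inter_subset_right (by omega))

def interMatrix (α : Type*) [DecidableEq α] (R : Type*) (s r : ℕ) (f : ℕ → R) :
    Matrix {A : Finset α // #A = s} {B : Finset α // #B = r} R :=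
  Matrix.of fun A B => f #(A.1 ∩ B.1)

def inclusionMatrix (α : Type*) [DecidableEq α] (R : Type*) [Zero R] [One R] (r s : ℕ) :
    Matrix {A : Finset α // #A = r} {B : Finset α // #B = s} R :=
  Matrix.of fun A B => if A.1 ⊆ B.1 then 1 else 0

section SetSystemMatrices

variable {α : Type*} [Fintype α] [DecidableEq α]

theorem interMatrix_mul_inclusionMatrix_apply {R : Type*} [CommRing R] {s r s' : ℕ}
    (f : ℕ → R) (A : {A : Finset α // #A = s}) (B : {B : Finset α // #B = s'}) :
    (interMatrix α R s r f * inclusionMatrix α R r s') A B =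
      ∑ C ∈ B.1.powersetCard r, f #(A.1 ∩ C) := by
  simp only [Matrix.mul_apply, interMatrix, inclusionMatrix, Matrix.of_apply, mul_ite, mul_one,
    mul_zero]
  have hsubsets : B.1.powersetCard r =
      (univ.filter fun C : {C : Finset α // #C = r} => C.1 ⊆ B.1).map
        (Function.Embedding.subtype _) := by
    ext C
    simp [and_comm]
  rw [← sum_filter, hsubsets, sum_map]
  rfl

theorem interMatrix_choose_mul_inclusionMatrix {R : Type*} [CommRing R] {s k r s' : ℕ}
    (hk : k ≤ r) :
    interMatrix α R s r (fun n => (n.choose k : R)) * inclusionMatrix α R r s' =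
      ((s' - k).choose (r - k) : R) • interMatrix α R s s' (fun n => (n.choose k : R)) := by
  ext A B
  rw [interMatrix_mul_inclusionMatrix_apply, ← Nat.cast_sum,
    sum_powersetCard_choose_card_inter _ _ hk, B.2]
  simp [interMatrix, mul_comm]

theorem exists_interMatrix_eval_eq_mul_inclusionMatrix {F : Type*} [Field F] {s r s' : ℕ}
    (P : F[X]) (hP : P.natDegree ≤ r) (hunit : ∀ k ≤ r, ((s' - k).choose (r - k) : F) ≠ 0) :
    ∃ W : Matrix {A : Finset α // #A = s} {C : Finset α // #C = r} F,
      interMatrix α F s s' (fun n => P.eval (n : F)) = W * inclusionMatrix α F r s' := by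
  obtain ⟨c, hc⟩ := P.exists_eval_natCast_eq_sum_mul_choose hP
  refine ⟨∑ k ∈ range (r + 1), (c k * ((s' - k).choose (r - k) : F)⁻¹) •
    interMatrix α F s r (fun n => (n.choose k : F)), ?_⟩
  have hterm : ∀ k ∈ range (r + 1), (c k * ((s' - k).choose (r - k) : F)⁻¹) •
      interMatrix α F s r (fun n => (n.choose k : F)) * inclusionMatrix α F r s' =
      c k • interMatrix α F s s' (fun n => (n.choose k : F)) := fun k hk => by
    rw [Matrix.smul_mul, interMatrix_choose_mul_inclusionMatrix (mem_range_succ_iff.1 hk),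
      smul_smul, inv_mul_cancel_right₀ (hunit k (mem_range_succ_iff.1 hk))]
  rw [Matrix.sum_mul, sum_congr rfl hterm]
  ext A B
  simp [interMatrix, Matrix.sum_apply, hc]

theorem rank_mul_inclusionMatrix_le {F : Type*} [Field F] {m : Type*} [Fintype m] {r s : ℕ}
    (W : Matrix m {A : Finset α // #A = r} F) :
    (W * inclusionMatrix α F r s).rank ≤ (Fintype.card α).choose r :=
  calc (W * inclusionMatrix α F r s).rank ≤ (inclusionMatrix α F r s).rank :=
        Matrix.rank_mul_le_right _ _
    _ ≤ Fintype.card {A : Finset α // #A = r} := Matrix.rank_le_card_height _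
    _ = (Fintype.card α).choose r := Fintype.card_finset_len r

end SetSystemMatrices

theorem rank_interMatrix_eval_le {α : Type*} [Fintype α] [DecidableEq α] {F : Type*} [Field F]
    {s s' r : ℕ} (hs : (s ! : F) ≠ 0) (hrs : r ≤ s) (P : F[X]) (hP : P.natDegree ≤ r) :
    (interMatrix α F s' s (fun n => P.eval (n : F))).rank ≤ (Fintype.card α).choose r := by
  have hunit : ∀ k ≤ r, ((s - k).choose (r - k) : F) ≠ 0 := fun k hk =>
    ne_zero_of_dvd_ne_zero hs <| Nat.cast_dvd_cast <|
      (Nat.choose_dvd_factorial (by omega)).trans (Nat.factorial_dvd_factorial (Nat.sub_le s k))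
  obtain ⟨W, hW⟩ :=
    exists_interMatrix_eval_eq_mul_inclusionMatrix (α := α) (s := s') P hP hunit
  rw [hW]
  exact rank_mul_inclusionMatrix_le W

theorem minrank_le_rank {F : Type*} [Field F] {V : Type*} [Fintype V] [DecidableEq V]
    {G : SimpleGraph V} {M : Matrix V V F} (hM : Represents G M) : minrank F G ≤ M.rank :=
  Nat.sInf_le ⟨M, hM, rfl⟩

theorem represents_kneser_interMatrix_eval_prod {F : Type*} [Field F] {d s : ℕ}
    (hs : (s ! : F) ≠ 0) (T : Finset ℕ) :
    Represents (kneser d s (T : Set ℕ)) (interMatrix (Fin d) F s s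
      (fun n => (∏ i ∈ range s \ T, (X - C (i : F))).eval (n : F))) := by
  refine ⟨fun A => ?_, fun A B hAB hnadj => ?_⟩
  · simp only [interMatrix, Matrix.of_apply, inter_self, A.2, eval_prod, eval_sub, eval_X,
      eval_C]
    refine prod_ne_zero_iff.2 fun i hi => ?_
    have his : i < s := mem_range.1 (mem_sdiff.1 hi).1
    rw [← Nat.cast_sub his.le]
    exact ne_zero_of_dvd_ne_zero hs (Nat.cast_dvd_cast (Nat.dvd_factorial (by omega) (by omega)))
  · have hroot : #(A.1 ∩ B.1) ∈ range s \ T := mem_sdiff.2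
      ⟨mem_range.2 (card_inter_lt_of_ne A.2 B.2 (Subtype.coe_injective.ne hAB)),
        fun hT => hnadj ⟨hAB, hT⟩⟩
    simp only [interMatrix, Matrix.of_apply, eval_prod]
    exact prod_eq_zero hroot (by simp)

theorem minrank_kneser_le_choose_general (d s t : ℕ) (T : Finset ℕ) (hT : ∀ i ∈ T, i < s)
    (hTcard : T.card = t) (p : ℕ) [Fact p.Prime] (hps : s < p) :
    minrank (ZMod p) (kneser d s (T : Set ℕ)) ≤ d.choose (s - t) := by
  set P : (ZMod p)[X] := ∏ i ∈ range s \ T, (X - C (i : ZMod p))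
  have hfact : (s ! : ZMod p) ≠ 0 := by
    rw [Ne, ZMod.natCast_eq_zero_iff, Nat.Prime.dvd_factorial Fact.out]
    omega
  have hdeg : P.natDegree ≤ s - t := by
    rw [natDegree_finsetProd_X_sub_C_eq_card,
      card_sdiff_of_subset fun i hi => mem_range.2 (hT i hi), card_range, hTcard]
  calc minrank (ZMod p) (kneser d s (T : Set ℕ))
      ≤ (interMatrix (Fin d) (ZMod p) s s (fun n => P.eval (n : ZMod p))).rank :=
        minrank_le_rank (represents_kneser_interMatrix_eval_prod hfact T)
    _ ≤ (Fintype.card (Fin d)).choose (s - t) :=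
        rank_interMatrix_eval_le hfact (Nat.sub_le s t) P hdeg
    _ = d.choose (s - t) := by rw [Fintype.card_fin]

/-- For `t ≤ s ≤ d`, a set `T ⊆ {0, 1, …, s-1}` of size `t`, and a prime `p > s`, the minrank
of `K(d, s, T)` over `F_p` is at most `C(d, s - t)`. -/
theorem minrank_kneser_le_choose (d s t : ℕ) (T : Finset ℕ) (hT : ∀ i ∈ T, i < s)
    (hTcard : T.card = t) (hts : t ≤ s) (hsd : s ≤ d) (p : ℕ) [Fact p.Prime] (hps : s < p) :
    minrank (ZMod p) (kneser d s (T : Set ℕ)) ≤ d.choose (s - t) :=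
  minrank_kneser_le_choose_general d s t T hT hTcard p hps
end

section
/- Let t < s < d be integers with s^2 > dt and let T = {0,1,...,t}. Then the vector chromatic number of the generalized Kneser graph K(d,s,T) is at most d(s-t)/(s^2 - dt). -/
/-- The vector chromatic number of a graph `G`: the infimum over `κ > 1` such that each vertex
can be assigned a unit vector with `⟪w u, w v⟫ ≤ -1/(κ-1)` for every edge `{u, v}`. -/
noncomputable def vectorChromaticNumber {V : Type*} (G : SimpleGraph V) : ℝ :=
  sInf {κ : ℝ | 1 < κ ∧ ∃ (m : ℕ) (w : V → EuclideanSpace ℝ (Fin m)),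
    (∀ v, ‖w v‖ = 1) ∧ ∀ u v : V, G.Adj u v → (inner ℝ (w u) (w v) : ℝ) ≤ -(1 / (κ - 1))}

/-!
Send an `s`-set `A ⊆ [d]` to its centred indicator vector `1_A - (s/d)·𝟙`. Its inner products
depend only on intersection sizes: `⟪x_A, x_B⟫ = |A ∩ B| - s²/d`, so `‖x_A‖² = s(d - s)/d`. After
normalising, two sets meeting in at most `t` points get inner product at most
`(dt - s²)/(s(d - s)) = -1/(κ - 1)` for `κ = d(s - t)/(s² - dt)`.
-/

open Finset

section CenteredIndicator

variable {ι : Type*} [Fintype ι] [DecidableEq ι]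

noncomputable def centeredIndicator (k : ℝ) (A : Finset ι) : EuclideanSpace ℝ ι :=
  WithLp.toLp 2 fun i => (if i ∈ A then 1 else 0) - k

theorem inner_centeredIndicator (k : ℝ) (A B : Finset ι) :
    inner ℝ (centeredIndicator k A) (centeredIndicator k B) =
      #(A ∩ B) - k * #A - k * #B + Fintype.card ι * k ^ 2 := by
  have expand : ∀ i : ι, ((if i ∈ B then (1 : ℝ) else 0) - k) * ((if i ∈ A then 1 else 0) - k) =
      (if i ∈ A ∩ B then 1 else 0) - k * (if i ∈ A then 1 else 0)
        - k * (if i ∈ B then 1 else 0) + k ^ 2 := by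
    intro i
    by_cases hA : i ∈ A <;> by_cases hB : i ∈ B <;> simp [hA, hB] <;> ring
  simp only [centeredIndicator, PiLp.inner_apply, RCLike.inner_apply, conj_trivial, expand,
    sum_add_distrib, sum_sub_distrib, ← mul_sum, sum_boole, sum_const, card_univ, nsmul_eq_mul]
  simp [-mem_inter]

end CenteredIndicator

theorem vectorChromaticNumber_le_of_inner_le {V : Type*} {G : SimpleGraph V} {m : ℕ}
    (x : V → EuclideanSpace ℝ (Fin m)) {r κ : ℝ} (hr : 0 < r) (hκ : 1 < κ)
    (hnorm : ∀ v, ‖x v‖ ^ 2 = r) (hadj : ∀ u v, G.Adj u v → inner ℝ (x u) (x v) ≤ -(r / (κ - 1))) :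
    vectorChromaticNumber G ≤ κ := by
  have norm_eq_sqrt : ∀ v, ‖x v‖ = √r := fun v => by rw [← hnorm, Real.sqrt_sq (norm_nonneg _)]
  have hsqrt : 0 < √r := Real.sqrt_pos.2 hr
  refine csInf_le ⟨1, fun _ hκ' => hκ'.1.le⟩
    ⟨hκ, m, fun v => (√r)⁻¹ • x v, fun v => ?_, fun u v huv => ?_⟩
  · rw [norm_smul, norm_inv, Real.norm_of_nonneg hsqrt.le, norm_eq_sqrt, inv_mul_cancel₀ hsqrt.ne']
  · rw [real_inner_smul_left, real_inner_smul_right, ← mul_assoc, ← mul_inv,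
      Real.mul_self_sqrt hr.le, inv_mul_le_iff₀ hr, mul_neg, mul_one_div]
    exact hadj u v huv

theorem vectorChromaticNumber_kneser_le_general (d s t : ℕ) (hsd : s < d)
    (h : d * t < s ^ 2) :
    vectorChromaticNumber (kneser d s {i : ℕ | i ≤ t}) ≤
      ((d : ℝ) * ((s : ℝ) - (t : ℝ))) / ((s : ℝ) ^ 2 - (d : ℝ) * (t : ℝ)) := by
  have hd : (0 : ℝ) < d := by exact_mod_cast (Nat.zero_le s).trans_lt hsd
  have hs : (0 : ℝ) < s := by
    exact_mod_cast Nat.pos_of_ne_zero (by rintro rfl; simp at h)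
  have hds : (0 : ℝ) < d - s := sub_pos.2 (by exact_mod_cast hsd)
  have hst : (0 : ℝ) < s ^ 2 - d * t := sub_pos.2 (by exact_mod_cast h)
  have inner_eq : ∀ A B : {A : Finset (Fin d) // #A = s},
      inner ℝ (centeredIndicator (s / d) A.1) (centeredIndicator (s / d) B.1) =
        #(A.1 ∩ B.1) - s ^ 2 / d := by
    intro A B
    rw [inner_centeredIndicator, A.2, B.2, Fintype.card_fin]
    field_simp
    ring
  have hκ : (d : ℝ) * (s - t) / (s ^ 2 - d * t) - 1 = s * (d - s) / (s ^ 2 - d * t) := by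
    field_simp
    ring
  refine vectorChromaticNumber_le_of_inner_le (fun A => centeredIndicator (s / d) A.1)
    (r := s * (d - s) / d) (by positivity) ?_ (fun A => ?_) (fun A B hAB => ?_)
  · linarith [show (0 : ℝ) < s * (d - s) / (s ^ 2 - d * t) by positivity]
  · rw [← real_inner_self_eq_norm_sq, inner_eq, inter_self, A.2]
    field_simp
  · have hcard : (#(A.1 ∩ B.1) : ℝ) ≤ t := by exact_mod_cast hAB.2
    calc _ = (#(A.1 ∩ B.1) : ℝ) - s ^ 2 / d := inner_eq A B
      _ ≤ t - s ^ 2 / d := by linarith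
      _ = _ := by rw [hκ]; field_simp; ring

/-- For `t < s < d` with `s² > d·t` and `T = {0, 1, …, t}`, the vector chromatic number of
`K(d, s, T)` is at most `d(s - t)/(s² - d·t)`. -/
theorem vectorChromaticNumber_kneser_le (d s t : ℕ) (hts : t < s) (hsd : s < d)
    (h : d * t < s ^ 2) :
    vectorChromaticNumber (kneser d s {i : ℕ | i ≤ t}) ≤
      ((d : ℝ) * ((s : ℝ) - (t : ℝ))) / ((s : ℝ) ^ 2 - (d : ℝ) * (t : ℝ)) :=
  vectorChromaticNumber_kneser_le_general d s t hsd h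
end

section
/- For an integer d ≥ 1, let G be the directed graph on vertex set {0,1,2}^d where for distinct u, v there is an edge from u to v iff every coordinate of u - v (mod 3) lies in {0,2}. Then the minrank of G over F_3 equals 2^d. -/
/-- A matrix `M` over a field `F` represents a directed graph with adjacency relation `Adj`
if all diagonal entries are nonzero and `M u v = 0` whenever `u ≠ v` and `(u, v)` is not a
directed edge. -/
def RepresentsDi {V F : Type*} [Field F] (Adj : V → V → Prop) (M : Matrix V V F) : Prop :=
  (∀ v, M v v ≠ 0) ∧ ∀ u v : V, u ≠ v → ¬Adj u v → M u v = 0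

/-- The minrank of a directed graph (given by its adjacency relation) over a field `F`. -/
noncomputable def minrankDi (F : Type*) [Field F] {V : Type*} [Fintype V] [DecidableEq V]
    (Adj : V → V → Prop) : ℕ :=
  sInf {r : ℕ | ∃ M : Matrix V V F, RepresentsDi Adj M ∧ M.rank = r}

/-!
Upper bound: `M u v = ∏ i, (u i - v i - 1)` represents the graph, since a non-edge `u ≠ v` has a
coordinate with `u i - v i = 1`, and each factor is a matrix of rank at most `2` in `(u i, v i)`,
so `M` is a tensor power of rank at most `2 ^ d`.

Lower bound: on the subcube `{0,1}^d` an edge `u → v` forces `u ≤ v` coordinatewise, so the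
induced subgraph is acyclic. In the lexicographic order, which extends it, any representing
matrix restricts to an upper triangular matrix with nonzero diagonal, which has full rank `2 ^ d`.
-/

section Minrank

variable {V F : Type*} [Field F] {Adj : V → V → Prop}

theorem representsDi_one [DecidableEq V] : RepresentsDi Adj (1 : Matrix V V F) :=
  ⟨fun _ => by simp, fun _ _ huv _ => Matrix.one_apply_ne huv⟩

theorem minrankDi_le_rank [Fintype V] [DecidableEq V] {M : Matrix V V F}
    (hM : RepresentsDi Adj M) : minrankDi F Adj ≤ M.rank :=
  Nat.sInf_le ⟨M, hM, rfl⟩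

theorem le_minrankDi [Fintype V] [DecidableEq V] {r : ℕ}
    (h : ∀ M : Matrix V V F, RepresentsDi Adj M → r ≤ M.rank) : r ≤ minrankDi F Adj :=
  le_csInf ⟨_, 1, representsDi_one, rfl⟩ fun _ ⟨M, hM, hr⟩ => hr ▸ h M hM

theorem RepresentsDi.card_le_rank [Fintype V] {ι : Type*} [Fintype ι] [LinearOrder ι]
    {M : Matrix V V F} (hM : RepresentsDi Adj M) {f : ι → V} (hf : Function.Injective f)
    (hAdj : ∀ i j, j < i → ¬Adj (f i) (f j)) : Fintype.card ι ≤ M.rank := by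
  have hupper : (M.submatrix f f).IsUpperTriangular := fun i j hji =>
    hM.2 _ _ (hf.ne hji.ne') (hAdj i j hji)
  have hdet : (M.submatrix f f).det ≠ 0 := by
    rw [Matrix.det_of_isUpperTriangular hupper]
    exact Finset.prod_ne_zero_iff.2 fun i _ => hM.1 (f i)
  calc Fintype.card ι = (M.submatrix f f).rank := (Matrix.rank_of_det_ne_zero hdet).symm
    _ ≤ M.rank := Matrix.rank_submatrix_le M f f

end Minrank

theorem Matrix.rank_of_prod_mul_apply_le {α β κ ι R : Type*} [Fintype β] [Fintype κ] [Fintype ι]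
    [DecidableEq ι] [CommRing R] [StrongRankCondition R] (A : Matrix α κ R) (B : Matrix κ β R) :
    (Matrix.of fun (u : ι → α) (v : ι → β) => ∏ i, (A * B) (u i) (v i)).rank ≤
      Fintype.card κ ^ Fintype.card ι := by
  have hfactor : (Matrix.of fun (u : ι → α) (v : ι → β) => ∏ i, (A * B) (u i) (v i)) =
      Matrix.of (fun u (s : ι → κ) => ∏ i, A (u i) (s i)) *
        Matrix.of (fun (s : ι → κ) v => ∏ i, B (s i) (v i)) := by
    ext u v
    simp only [Matrix.of_apply, Matrix.mul_apply, Finset.prod_univ_sum, Fintype.piFinset_univ,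
      Finset.prod_mul_distrib]
  rw [hfactor]
  calc _ ≤ Fintype.card (ι → κ) := (Matrix.rank_mul_le_left _ _).trans (Matrix.rank_le_card_width _)
    _ = _ := by simp

namespace Blokhuis

def Adj (d : ℕ) (u v : Fin d → Fin 3) : Prop :=
  u ≠ v ∧ ∀ i, (((u i : ℕ) : ZMod 3) - ((v i : ℕ) : ZMod 3)) ≠ 1

def matrix (d : ℕ) : Matrix (Fin d → Fin 3) (Fin d → Fin 3) (ZMod 3) :=
  Matrix.of fun u v => ∏ i, (((u i : ℕ) : ZMod 3) - ((v i : ℕ) : ZMod 3) - 1)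

theorem representsDi_matrix (d : ℕ) : RepresentsDi (Adj d) (matrix d) := by
  refine ⟨fun v => ?_, fun u v huv hnot => ?_⟩
  · simp only [matrix, Matrix.of_apply, sub_self, zero_sub, Finset.prod_const]
    exact pow_ne_zero _ (by decide)
  · obtain ⟨i, hi⟩ : ∃ i, ((u i : ℕ) : ZMod 3) - ((v i : ℕ) : ZMod 3) = 1 := by
      simpa [Adj, huv] using hnot
    exact Finset.prod_eq_zero (Finset.mem_univ i) (by rw [hi, sub_self])

theorem matrix_rank_le (d : ℕ) : (matrix d).rank ≤ 2 ^ d := by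
  -- `x - y - 1 = x * 1 + 1 * (-y - 1)`
  let A : Matrix (Fin 3) (Fin 2) (ZMod 3) := Matrix.of fun a => ![((a : ℕ) : ZMod 3), 1]
  let B : Matrix (Fin 2) (Fin 3) (ZMod 3) := Matrix.of ![1, fun b => -((b : ℕ) : ZMod 3) - 1]
  have hAB : matrix d = Matrix.of fun u v => ∏ i, (A * B) (u i) (v i) := by
    ext u v
    simp only [matrix, Matrix.of_apply, Matrix.mul_apply, Fin.sum_univ_two, A, B]
    congr! 1 with i
    simp only [Matrix.cons_val_zero, Matrix.cons_val_one, Pi.one_apply]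
    ring
  simpa [hAB] using Matrix.rank_of_prod_mul_apply_le (ι := Fin d) A B

def cubeEmbedding (d : ℕ) (w : Lex (Fin d → Fin 2)) : Fin d → Fin 3 :=
  fun i => Fin.castLE (by norm_num) (ofLex w i)

theorem cubeEmbedding_injective (d : ℕ) : Function.Injective (cubeEmbedding d) :=
  fun _ _ h => funext fun i => Fin.castLE_injective _ (congrFun h i)

theorem le_of_adj_cubeEmbedding {d : ℕ} {w w' : Lex (Fin d → Fin 2)}
    (h : Adj d (cubeEmbedding d w) (cubeEmbedding d w')) : w ≤ w' := by
  have hcoord : ∀ a b : Fin 2, ((a : ℕ) : ZMod 3) - ((b : ℕ) : ZMod 3) ≠ 1 → a ≤ b := by decide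
  exact Pi.toLex_monotone fun i => hcoord _ _ (h.2 i)

theorem le_rank_of_representsDi {d : ℕ} {M : Matrix (Fin d → Fin 3) (Fin d → Fin 3) (ZMod 3)}
    (hM : RepresentsDi (Adj d) M) : 2 ^ d ≤ M.rank := by
  simpa using hM.card_le_rank (cubeEmbedding_injective d)
    fun _ _ hlt hadj => (le_of_adj_cubeEmbedding hadj).not_gt hlt

end Blokhuis

theorem minrankDi_blokhuis_general (d : ℕ) :
    minrankDi (ZMod 3) (fun u v : Fin d → Fin 3 =>
        u ≠ v ∧ ∀ i, (((u i : ℕ) : ZMod 3) - ((v i : ℕ) : ZMod 3)) ≠ 1) = 2 ^ d :=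
  le_antisymm ((minrankDi_le_rank (Blokhuis.representsDi_matrix d)).trans
      (Blokhuis.matrix_rank_le d))
    (le_minrankDi fun _ => Blokhuis.le_rank_of_representsDi)

/-- For `d ≥ 1`, the directed graph on `{0,1,2}^d` with an edge from `u` to `v` (for `u ≠ v`)
iff every coordinate of `u - v` is `0` or `2` modulo `3` has minrank exactly `2 ^ d`
over `F_3`. -/
theorem minrankDi_blokhuis (d : ℕ) (hd : 1 ≤ d) :
    minrankDi (ZMod 3) (fun u v : Fin d → Fin 3 =>
        u ≠ v ∧ ∀ i, (((u i : ℕ) : ZMod 3) - ((v i : ℕ) : ZMod 3)) ≠ 1) = 2 ^ d :=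
  minrankDi_blokhuis_general d
end
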